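/- Suppose the preferences are symmetric and every connected component of the seat graph G has at most two vertices. Let H₊ be the graph on the agent set P with an edge {p, q} whenever f_p(q) > 0. Then in every envy-free arrangement π, for every connected component C of H₊, either every agent of C is assigned by π to an endpoint of an edge of G, or every agent of C is assigned by π to an isolated vertex of G. -/
import Mathlib


open scoped Classical

noncomputable section

namespace SeatArrangement

variable {P V : Type*}

/-- The utility of agent `p` under arrangement `π`:
the sum, over the seat-graph neighbors `v` of `π p`, of `p`'s preference for the agent seated
at `v`. -/
def utility [Fintype V] (G : SimpleGraph V) (f : P → P → ℝ) (π : P ≃ V) (p : P) : ℝ :=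
  ∑ v : V, if G.Adj (π p) v then f p (π.symm v) else 0

/-- The social welfare of an arrangement: the sum of the utilities of all agents. -/
def sw [Fintype P] [Fintype V] (G : SimpleGraph V) (f : P → P → ℝ) (π : P ≃ V) : ℝ :=
  ∑ p : P, utility G f π p

/-- The `(p,q)`-swap arrangement of `π`. -/
def swapArr (π : P ≃ V) (p q : P) : P ≃ V := (Equiv.swap p q).trans π

/-- `{p, q}` is a blocking pair for `π`: both agents strictly improve by swapping seats. -/
def blocking [Fintype V] (G : SimpleGraph V) (f : P → P → ℝ) (π : P ≃ V) (p q : P) : Prop :=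
  p ≠ q ∧ utility G f π p < utility G f (swapArr π p q) p
        ∧ utility G f π q < utility G f (swapArr π p q) q

/-- An arrangement is stable if it has no blocking pair. -/
def stable [Fintype V] (G : SimpleGraph V) (f : P → P → ℝ) (π : P ≃ V) : Prop :=
  ∀ p q : P, ¬ blocking G f π p q

/-- An arrangement is envy-free if no agent would strictly improve by taking
another agent's seat (via a swap). -/
def envyFree [Fintype V] (G : SimpleGraph V) (f : P → P → ℝ) (π : P ≃ V) : Prop :=
  ∀ p q : P, p ≠ q → utility G f (swapArr π p q) p ≤ utility G f π p

/-- The least utility of an agent under `π` (for a finite nonempty set of agents, the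
infimum of the range of utilities is the minimum utility). -/
def minUtil [Fintype V] (G : SimpleGraph V) (f : P → P → ℝ) (π : P ≃ V) : ℝ :=
  sInf (Set.range (utility G f π))

/-- A maximin arrangement maximizes the least utility of an agent. -/
def maximin [Fintype V] (G : SimpleGraph V) (f : P → P → ℝ) (πf : P ≃ V) : Prop :=
  ∀ π : P ≃ V, minUtil G f π ≤ minUtil G f πf

/-- A maximum arrangement maximizes the social welfare. -/
def maximum [Fintype P] [Fintype V] (G : SimpleGraph V) (f : P → P → ℝ) (πm : P ≃ V) : Prop :=
  ∀ π : P ≃ V, sw G f π ≤ sw G f πm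

end SeatArrangement

open SeatArrangement

/-- with symmetric preferences and a seat graph whose connected components
have at most two vertices, in every envy-free arrangement, any two agents connected in the
positive-preference graph `H₊` (i.e. related by the reflexive-transitive closure of
"having positive mutual preference") are either both seated at endpoints of edges of `G` or
both seated at isolated vertices of `G`. -/
theorem envyFree_component_all_edges_or_all_isolated {P V : Type*} [Fintype P] [Fintype V]
    (G : SimpleGraph V) (f : P → P → ℝ)
    (hsym : ∀ p q : P, p ≠ q → f p q = f q p)
    (hcomp : ∀ c : G.ConnectedComponent, c.supp.ncard ≤ 2)
    (π : P ≃ V) (hEF : envyFree G f π) :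
    ∀ p q : P, Relation.ReflTransGen (fun a b => a ≠ b ∧ 0 < f a b) p q →
      ((∃ w : V, G.Adj (π p) w) ↔ (∃ w : V, G.Adj (π q) w)) := by

  have hadj : ∀ a b c : V, G.Adj a b → G.Adj a c → b = c := by
    intro a b c hab hac
    by_contra hbc
    have hsub : ({a, b, c} : Set V) ⊆ (G.connectedComponentMk a).supp := by
      intro v hv
      simp only [Set.mem_insert_iff, Set.mem_singleton_iff] at hv
      rcases hv with rfl | rfl | rfl
      · rfl
      · exact SimpleGraph.ConnectedComponent.sound hab.symm.reachable
      · exact SimpleGraph.ConnectedComponent.sound hac.symm.reachable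
    have h3 : ({a, b, c} : Set V).ncard = 3 := by
      rw [Set.ncard_insert_of_notMem (by simp [hab.ne, hac.ne]),
        Set.ncard_pair hbc]
    have := Set.ncard_le_ncard hsub (Set.toFinite _)
    have := hcomp (G.connectedComponentMk a)
    omega
  have key : ∀ p q : P, p ≠ q → 0 < f p q →
      (∃ w : V, G.Adj (π p) w) → ¬(∃ w : V, G.Adj (π q) w) → False := by
    intro p q hpq hf ⟨w, hw⟩ hq
    set r := π.symm w with hr
    have hπr : π r = w := π.apply_symm_apply w
    have hrq : q ≠ r := by
      rintro rfl
      exact hq ⟨π p, by rw [hπr] at *; exact hw.symm⟩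
    have hrp : p ≠ r := by
      rintro rfl
      exact G.irrefl (hπr ▸ hw)
    have hEFq := hEF q r hrq
    have hUq : utility G f π q = 0 := by
      unfold utility
      apply Finset.sum_eq_zero
      intro v _
      rw [if_neg (fun h => hq ⟨v, h⟩)]
    have hπ'q : (swapArr π q r) q = w := by
      simp [swapArr, Equiv.swap_apply_left, hπr]
    have hπ'symm : (swapArr π q r).symm (π p) = p := by
      simp [swapArr, Equiv.symm_apply_eq, Equiv.swap_apply_of_ne_of_ne hpq hrp]
    have hU' : utility G f (swapArr π q r) q = f q p := by
      unfold utility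
      rw [Finset.sum_eq_single_of_mem (π p) (Finset.mem_univ _)]
      · rw [hπ'q, if_pos hw.symm, hπ'symm]
      · intro v _ hv
        rw [hπ'q, if_neg]
        intro h
        exact hv (hadj w v (π p) h hw.symm)
    rw [hUq, hU', hsym q p hpq.symm] at hEFq
    exact absurd hEFq (not_le.mpr hf)
  intro p q hrel
  induction hrel with
  | refl => rfl
  | tail _ hbc ih =>
    rename_i b c _
    refine ih.trans ?_
    obtain ⟨hne, hf⟩ := hbc
    constructor
    · intro hb
      by_contra hc
      exact key b c hne hf hb hc
    · intro hc
      by_contra hb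
      exact key c b hne.symm (by rwa [← hsym b c hne]) hc hb
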